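/- arXiv:2102.08570 — 3 statements merged into one kernel-verified Lean document; each statement's English description precedes it below -/
import Mathlib

section
/- Let ε, β, γ > 0 with ε > γ/(2β), let R > 0 and Θ = {θ ∈ ℝ^d : ‖θ‖ ≤ R}, and let PR(θ) = (γ/2 - εβ)‖θ‖². Then θ_PS = 0 satisfies PR(θ_PS) - inf_{θ∈Θ} PR(θ) = (εβ - γ/2)R², which can be made larger than any prescribed Δ > 0 by choosing R large enough. -/
/-!
With `c = εβ - γ/2 > 0`, the performative risk `-c‖θ‖²` is a nonincreasing function of `‖θ‖`,
so on the ball of radius `R` its infimum `-cR²` is attained on the sphere, while `PR 0 = 0`.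
The gap `cR²` grows without bound in `R`.
-/

open Filter Metric

theorem iInf_closedBall_comp_norm {E : Type*} [NormedAddCommGroup E] [NormedSpace ℝ E]
    [Nontrivial E] {f : ℝ → ℝ} {R : ℝ} (hR : 0 ≤ R) (hf : AntitoneOn f (Set.Icc 0 R)) :
    ⨅ x : closedBall (0 : E) R, f ‖(x : E)‖ = f R := by
  obtain ⟨x, hx⟩ := exists_norm_eq E hR
  have hx_mem : x ∈ closedBall (0 : E) R := by simp [hx]
  have : Nonempty (closedBall (0 : E) R) := ⟨⟨x, hx_mem⟩⟩
  refine IsGLB.ciInf_eq (IsLeast.isGLB ⟨⟨⟨x, hx_mem⟩, by simp [hx]⟩, ?_⟩)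
  rintro _ ⟨⟨y, hy⟩, rfl⟩
  have hy_norm : ‖y‖ ≤ R := by simpa using hy
  exact hf ⟨norm_nonneg y, hy_norm⟩ ⟨hR, le_rfl⟩ hy_norm

theorem antitoneOn_const_mul_sq {a : ℝ} (ha : a ≤ 0) :
    AntitoneOn (fun t : ℝ => a * t ^ 2) (Set.Ici 0) :=
  fun _ hu _ _ huv => mul_le_mul_of_nonpos_left (pow_le_pow_left₀ hu huv 2) ha

theorem exists_pos_const_mul_sq_gt {c : ℝ} (hc : 0 < c) (Δ : ℝ) : ∃ R > (0 : ℝ), c * R ^ 2 > Δ :=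
  (((tendsto_pow_atTop two_ne_zero).const_mul_atTop hc).eventually_gt_atTop Δ
    |>.and (eventually_gt_atTop 0)).exists.imp fun _ h => ⟨h.2, h.1⟩

theorem stmt2_general (d : ℕ) (hd : 0 < d) (ε β γ : ℝ) (hβ : 0 < β)
    (h : ε > γ / (2 * β)) (R : ℝ) (hR : 0 < R)
    (PR : EuclideanSpace ℝ (Fin d) → ℝ)
    (hPR : ∀ θ, PR θ = (γ / 2 - ε * β) * ‖θ‖ ^ 2) :
    (PR 0 - ⨅ θ : Metric.closedBall (0 : EuclideanSpace ℝ (Fin d)) R, PR θ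
      = (ε * β - γ / 2) * R ^ 2) ∧
    ∀ Δ > (0 : ℝ), ∃ R' > (0 : ℝ), (ε * β - γ / 2) * R' ^ 2 > Δ := by
  have hc : 0 < ε * β - γ / 2 := by
    have := (div_lt_iff₀ (by positivity : (0 : ℝ) < 2 * β)).mp h
    linarith
  have : Nonempty (Fin d) := ⟨⟨0, hd⟩⟩
  refine ⟨?_, fun Δ _ => exists_pos_const_mul_sq_gt hc Δ⟩
  have hinf := iInf_closedBall_comp_norm (E := EuclideanSpace ℝ (Fin d)) hR.le
    ((antitoneOn_const_mul_sq (by linarith : γ / 2 - ε * β ≤ 0)).mono Set.Icc_subset_Ici_self)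
  simp only [hPR, hinf, norm_zero]
  ring

/-- For ε > γ/(2β), Θ the ball of radius R, and PR(θ) = (γ/2 - εβ)‖θ‖²,
the stable point θ_PS = 0 satisfies PR(0) - inf_{θ∈Θ} PR(θ) = (εβ - γ/2)R², which can
be made larger than any Δ > 0 by choosing R large. -/
theorem stmt2 (d : ℕ) (hd : 0 < d) (ε β γ : ℝ) (hε : 0 < ε) (hβ : 0 < β) (hγ : 0 < γ)
    (h : ε > γ / (2 * β)) (R : ℝ) (hR : 0 < R)
    (PR : EuclideanSpace ℝ (Fin d) → ℝ)
    (hPR : ∀ θ, PR θ = (γ / 2 - ε * β) * ‖θ‖ ^ 2) :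
    (PR 0 - ⨅ θ : Metric.closedBall (0 : EuclideanSpace ℝ (Fin d)) R, PR θ
      = (ε * β - γ / 2) * R ^ 2) ∧
    ∀ Δ > (0 : ℝ), ∃ R' > (0 : ℝ), (ε * β - γ / 2) * R' ^ 2 > Δ :=
  stmt2_general d hd ε β γ hβ h R hR PR hPR
end

section
/- Let D₀ be a zero-mean distribution on ℝ^m with finite second moment, and let D(θ) be the law of z₀ + μθ with μ : ℝ^d → ℝ^m linear. Let g : ℝ^m → ℝ be γ_z-strongly convex. Then for all θ, θ' and α ∈ [0,1]: E_{z∼D(αθ+(1-α)θ')} g(z) ≤ α E_{z∼D(θ)} g(z) + (1-α) E_{z∼D(θ')} g(z) − (α(1-α)γ_z/2)‖μ(θ − θ')‖². -/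
/-!
Strong convexity of `g` holds pointwise along every translate `z + ·`, so averaging the
strong-convexity inequality for the points `z + μ θ`, `z + μ θ'` over `z ∼ D₀` gives the claim;
the noise cancels in the difference of the two points, leaving `‖μ (θ - θ')‖`.
-/

open MeasureTheory

section StrongConvexTranslate

variable {E : Type*} [NormedAddCommGroup E] [NormedSpace ℝ E] {f : E → ℝ} {m a b : ℝ}

lemma StrongConvexOn.apply_add_combo_le (hf : StrongConvexOn Set.univ m f) (z u v : E)
    (ha : 0 ≤ a) (hb : 0 ≤ b) (hab : a + b = 1) :
    f (z + (a • u + b • v))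
      ≤ a * f (z + u) + b * f (z + v) - a * b * (m / 2 * ‖u - v‖ ^ 2) := by
  have h := hf.2 (Set.mem_univ (z + u)) (Set.mem_univ (z + v)) ha hb hab
  have hcombo : a • (z + u) + b • (z + v) = z + (a • u + b • v) := by
    rw [smul_add, smul_add, add_add_add_comm, ← add_smul, hab, one_smul]
  rwa [hcombo, add_sub_add_left_eq_sub] at h

lemma StrongConvexOn.integral_add_combo_le [MeasurableSpace E] {P : Measure E}
    [IsProbabilityMeasure P] (hf : StrongConvexOn Set.univ m f) (u v : E)
    (ha : 0 ≤ a) (hb : 0 ≤ b) (hab : a + b = 1)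
    (hcombo : Integrable (fun z => f (z + (a • u + b • v))) P)
    (hu : Integrable (fun z => f (z + u)) P) (hv : Integrable (fun z => f (z + v)) P) :
    ∫ z, f (z + (a • u + b • v)) ∂P
      ≤ a * ∫ z, f (z + u) ∂P + b * ∫ z, f (z + v) ∂P - a * b * (m / 2 * ‖u - v‖ ^ 2) := by
  have hmix : Integrable (fun z => a * f (z + u) + b * f (z + v)) P :=
    (hu.const_mul a).add (hv.const_mul b)
  calc ∫ z, f (z + (a • u + b • v)) ∂P
      ≤ ∫ z, (a * f (z + u) + b * f (z + v) - a * b * (m / 2 * ‖u - v‖ ^ 2)) ∂P :=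
        integral_mono hcombo (hmix.sub (integrable_const _))
          fun z => hf.apply_add_combo_le z u v ha hb hab
    _ = _ := by
        rw [integral_sub hmix (integrable_const _), integral_add (hu.const_mul a) (hv.const_mul b),
          integral_const_mul, integral_const_mul, integral_const, probReal_univ, one_smul]

end StrongConvexTranslate

theorem stmt6_general (m d : ℕ) (D0 : Measure (EuclideanSpace ℝ (Fin m))) [IsProbabilityMeasure D0]
    (μ : EuclideanSpace ℝ (Fin d) →ₗ[ℝ] EuclideanSpace ℝ (Fin m))
    (γz : ℝ)
    (g : EuclideanSpace ℝ (Fin m) → ℝ)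
    (hg : ConvexOn ℝ Set.univ (fun z => g z - γz / 2 * ‖z‖ ^ 2))
    (θ θ' : EuclideanSpace ℝ (Fin d)) (α : ℝ) (hα : α ∈ Set.Icc (0 : ℝ) 1)
    (h1 : Integrable (fun z => g (z + μ (α • θ + (1 - α) • θ'))) D0)
    (h2 : Integrable (fun z => g (z + μ θ)) D0)
    (h3 : Integrable (fun z => g (z + μ θ')) D0) :
    ∫ z, g (z + μ (α • θ + (1 - α) • θ')) ∂D0
      ≤ α * ∫ z, g (z + μ θ) ∂D0 + (1 - α) * ∫ z, g (z + μ θ') ∂D0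
        - α * (1 - α) * γz / 2 * ‖μ (θ - θ')‖ ^ 2 := by
  obtain ⟨hα0, hα1⟩ := hα
  have hstrong : StrongConvexOn Set.univ γz g := strongConvexOn_iff_convex.mpr hg
  rw [map_add, map_smul, map_smul] at h1 ⊢
  have key := hstrong.integral_add_combo_le (μ θ) (μ θ') hα0 (sub_nonneg.mpr hα1)
    (add_sub_cancel α 1) h1 h2 h3
  rw [map_sub]
  linarith

/-- For a location family D(θ) = law of z₀ + μθ with z₀ ∼ D₀ zero-mean with
finite second moment, and g γ_z-strongly convex (g - (γ_z/2)‖·‖² convex),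
E_{z∼D(αθ+(1-α)θ')} g(z) ≤ α E_{z∼D(θ)} g + (1-α) E_{z∼D(θ')} g
  − (α(1-α)γ_z/2)‖μ(θ − θ')‖². -/
theorem stmt6 (m d : ℕ) (D0 : Measure (EuclideanSpace ℝ (Fin m))) [IsProbabilityMeasure D0]
    (hmean : ∫ z, z ∂D0 = 0) (hmom : Integrable (fun z => ‖z‖ ^ 2) D0)
    (μ : EuclideanSpace ℝ (Fin d) →ₗ[ℝ] EuclideanSpace ℝ (Fin m))
    (γz : ℝ) (hγz : 0 ≤ γz)
    (g : EuclideanSpace ℝ (Fin m) → ℝ)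
    (hg : ConvexOn ℝ Set.univ (fun z => g z - γz / 2 * ‖z‖ ^ 2))
    (θ θ' : EuclideanSpace ℝ (Fin d)) (α : ℝ) (hα : α ∈ Set.Icc (0 : ℝ) 1)
    (h1 : Integrable (fun z => g (z + μ (α • θ + (1 - α) • θ'))) D0)
    (h2 : Integrable (fun z => g (z + μ θ)) D0)
    (h3 : Integrable (fun z => g (z + μ θ')) D0) :
    ∫ z, g (z + μ (α • θ + (1 - α) • θ')) ∂D0
      ≤ α * ∫ z, g (z + μ θ) ∂D0 + (1 - α) * ∫ z, g (z + μ θ') ∂D0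
        - α * (1 - α) * γz / 2 * ‖μ (θ - θ')‖ ^ 2 :=
  stmt6_general m d D0 μ γz g hg θ θ' α hα h1 h2 h3
end

section
/- Let D₀ be a zero-mean distribution on ℝ^m with covariance Σ_{z₀} and D(θ) the law of (Σ₀+Σ(θ))z₀ + μ₀ + μθ with Σ(·), μ linear. Define σ_max(μ) = max_{‖θ‖=1} ‖μθ‖ and σ_max(Σ) = max_{‖θ‖=1} ‖Σ_{z₀}^{1/2} Σ(θ)ᵀ‖_F. Then D(·) is ε-sensitive (W₁(D(θ),D(θ')) ≤ ε‖θ−θ'‖ for all θ, θ') with ε = sqrt(σ_max(μ)² + σ_max(Σ)²). -/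
/-!
Couple `D θ` and `D θ'` through the same sample `z₀`: then `W₁` is at most
`E‖Σ(v) z₀ + μ v‖` with `v = θ - θ'`. Because `z₀` is centred, the cross term drops out of
`E‖Σ(v) z₀ + μ v‖² = E‖Σ(v) z₀‖² + ‖μ v‖²`, and `E‖Σ(v) z₀‖² = tr(Σ(v) C Σ(v)ᵀ)` is the squared
Frobenius norm of `C^{1/2} Σ(v)ᵀ`. Jensen's inequality `E‖X‖ ≤ (E‖X‖²)^{1/2}` and homogeneity of
both terms in `v` finish the proof.
-/

open MeasureTheory Matrix

noncomputable def W1 {m : ℕ} (P Q : Measure (EuclideanSpace ℝ (Fin m))) : ℝ :=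
  sInf {x : ℝ | ∃ π : Measure (EuclideanSpace ℝ (Fin m) × EuclideanSpace ℝ (Fin m)),
    π.fst = P ∧ π.snd = Q ∧ x = ∫ p, ‖p.1 - p.2‖ ∂π}

theorem norm_apply_le_iSup_sphere_mul_norm {E F : Type*} [NormedAddCommGroup E]
    [NormedSpace ℝ E] [SeminormedAddCommGroup F] [NormedSpace ℝ F] (f : E →L[ℝ] F) (v : E) :
    ‖f v‖ ≤ (⨆ θ : Metric.sphere (0 : E) 1, ‖f θ‖) * ‖v‖ := by
  rcases subsingleton_or_nontrivial E with hE | hE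
  · simp [Subsingleton.elim v 0]
  · rw [← sSup_image' (f := fun x => ‖f x‖), f.sSup_sphere_eq_norm]
    exact f.le_opNorm v

namespace Matrix

variable {n p : Type*} [Fintype n] [Fintype p]

theorem PosSemidef.cfc_sqrt_transpose_mul_self [DecidableEq n] {C : Matrix n n ℝ}
    (hC : C.PosSemidef) :
    (hC.1.cfc Real.sqrt)ᵀ * hC.1.cfc Real.sqrt = C := by
  rw [← hC.1.cfc_eq, ← conjTranspose_eq_transpose_of_trivial, ← star_eq_conjTranspose,
    (cfc_predicate Real.sqrt C : IsSelfAdjoint _).star_eq, ← cfc_mul Real.sqrt Real.sqrt C]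
  conv_rhs => rw [← cfc_id' ℝ C hC.1.isSelfAdjoint]
  refine cfc_congr fun x hx => ?_
  rw [hC.1.spectrum_real_eq_range_eigenvalues] at hx
  obtain ⟨i, rfl⟩ := hx
  exact Real.mul_self_sqrt (hC.eigenvalues_nonneg i)

theorem trace_transpose_mul_self {R : Type*} [CommSemiring R] (A : Matrix p n R) :
    trace (Aᵀ * A) = ∑ i, ∑ j, A i j ^ 2 := by
  rw [Finset.sum_comm]
  simp [trace, mul_apply, sq]

theorem trace_mul_mul_transpose_eq_sum_sq {R C : Matrix n n ℝ} (hRC : Rᵀ * R = C)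
    (M : Matrix p n ℝ) : trace (M * C * Mᵀ) = ∑ i, ∑ j, (R * Mᵀ) i j ^ 2 := by
  rw [← trace_transpose_mul_self, transpose_mul, transpose_transpose, ← hRC]
  simp only [Matrix.mul_assoc]

section Frobenius

attribute [local instance] frobeniusNormedAddCommGroup frobeniusNormedSpace

theorem frobenius_norm_eq_sqrt (A : Matrix p n ℝ) : ‖A‖ = √(∑ i, ∑ j, A i j ^ 2) := by
  simp [frobenius_norm_def, Real.sqrt_eq_rpow]

theorem sqrt_sum_sq_le_iSup_sphere_mul_norm {E : Type*} [NormedAddCommGroup E]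
    [NormedSpace ℝ E] [FiniteDimensional ℝ E] (L : E →ₗ[ℝ] Matrix p n ℝ) (v : E) :
    √(∑ i, ∑ j, L v i j ^ 2) ≤
      (⨆ θ : Metric.sphere (0 : E) 1, √(∑ i, ∑ j, L θ i j ^ 2)) * ‖v‖ := by
  simp_rw [← frobenius_norm_eq_sqrt]
  exact norm_apply_le_iSup_sphere_mul_norm (LinearMap.toContinuousLinearMap L) v

end Frobenius

theorem integral_norm_toEuclideanLin_sq [DecidableEq n] {P : Measure (EuclideanSpace ℝ n)}
    (hmom : Integrable (fun z => ‖z‖ ^ 2) P) {C : Matrix n n ℝ}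
    (hC : ∀ i j, C i j = ∫ z, z i * z j ∂P) (M : Matrix p n ℝ) :
    ∫ z, ‖toEuclideanLin M z‖ ^ 2 ∂P = trace (M * C * Mᵀ) := by
  have hL2 : MemLp (fun z : EuclideanSpace ℝ n => z) 2 P :=
    (memLp_two_iff_integrable_sq_norm aestronglyMeasurable_id).2 hmom
  have hcoord : ∀ j, MemLp (fun z : EuclideanSpace ℝ n => z j) 2 P := fun j =>
    (EuclideanSpace.proj j : EuclideanSpace ℝ n →L[ℝ] ℝ).comp_memLp' hL2
  have hint : ∀ i j k, Integrable (fun z : EuclideanSpace ℝ n => M i k * M i j * (z k * z j)) P :=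
    fun i j k => ((hcoord k).integrable_mul (hcoord j)).const_mul (M i k * M i j)
  have hexpand : ∀ z : EuclideanSpace ℝ n,
      ‖toEuclideanLin M z‖ ^ 2 = ∑ i, ∑ j, ∑ k, M i k * M i j * (z k * z j) := fun z => by
    rw [EuclideanSpace.norm_sq_eq]
    refine Finset.sum_congr rfl fun i _ => ?_
    rw [Real.norm_eq_abs, sq_abs, sq]
    simp only [toLpLin_apply, mulVec, dotProduct, Finset.sum_mul_sum]
    exact Finset.sum_comm.trans (by simp only [mul_mul_mul_comm])
  simp_rw [hexpand]
  rw [integral_finsetSum _ fun i _ => integrable_finsetSum _ fun j _ =>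
    integrable_finsetSum _ fun k _ => hint i j k]
  simp only [trace, diag, mul_apply, transpose_apply, Finset.sum_mul]
  refine Finset.sum_congr rfl fun i _ => ?_
  rw [integral_finsetSum _ fun j _ => integrable_finsetSum _ fun k _ => hint i j k]
  refine Finset.sum_congr rfl fun j _ => ?_
  rw [integral_finsetSum _ fun k _ => hint i j k]
  refine Finset.sum_congr rfl fun k _ => ?_
  rw [integral_const_mul, ← hC]
  ring

end Matrix

section Moments

variable {Ω : Type*} [MeasurableSpace Ω] {P : Measure Ω} [IsProbabilityMeasure P]

theorem integral_le_sqrt_integral_sq {X : Ω → ℝ} (hX : MemLp X 2 P) :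
    ∫ ω, X ω ∂P ≤ √(∫ ω, X ω ^ 2 ∂P) := by
  have h := ProbabilityTheory.variance_nonneg X P
  rw [ProbabilityTheory.variance_eq_sub hX] at h
  exact (le_abs_self _).trans (Real.abs_le_sqrt (by simpa using h))

variable {F : Type*} [NormedAddCommGroup F] [InnerProductSpace ℝ F] [CompleteSpace F]

theorem integral_norm_add_const_sq {Y : Ω → F} (hY : MemLp Y 2 P) (hY0 : ∫ ω, Y ω ∂P = 0)
    (w : F) : ∫ ω, ‖Y ω + w‖ ^ 2 ∂P = ∫ ω, ‖Y ω‖ ^ 2 ∂P + ‖w‖ ^ 2 := by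
  have hYsq : Integrable (fun ω => ‖Y ω‖ ^ 2) P := hY.integrable_norm_pow two_ne_zero
  have hinner : Integrable (fun ω => 2 * inner ℝ w (Y ω)) P :=
    ((hY.integrable one_le_two).const_inner w).const_mul 2
  have hexpand : ∀ ω, ‖Y ω + w‖ ^ 2 = ‖Y ω‖ ^ 2 + 2 * inner ℝ w (Y ω) + ‖w‖ ^ 2 := fun ω => by
    rw [norm_add_sq_real, real_inner_comm]
  simp_rw [hexpand]
  rw [integral_add (f := fun ω => ‖Y ω‖ ^ 2 + 2 * inner ℝ w (Y ω)) (hYsq.add hinner)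
    (integrable_const _), integral_add hYsq hinner, integral_const_mul,
    integral_inner (hY.integrable one_le_two), hY0]
  simp

theorem integral_norm_add_const_le_sqrt {Y : Ω → F} (hY : MemLp Y 2 P)
    (hY0 : ∫ ω, Y ω ∂P = 0) (w : F) :
    ∫ ω, ‖Y ω + w‖ ∂P ≤ √(∫ ω, ‖Y ω‖ ^ 2 ∂P + ‖w‖ ^ 2) := by
  rw [← integral_norm_add_const_sq hY hY0 w]
  exact integral_le_sqrt_integral_sq (hY.add (memLp_const w)).norm

end Moments

theorem W1_map_le_integral_norm_sub {m : ℕ} (P : Measure (EuclideanSpace ℝ (Fin m)))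
    {f g : EuclideanSpace ℝ (Fin m) → EuclideanSpace ℝ (Fin m)}
    (hf : Measurable f) (hg : Measurable g) :
    W1 (P.map f) (P.map g) ≤ ∫ z, ‖f z - g z‖ ∂P := by
  have hfg : Measurable fun z => (f z, g z) := hf.prodMk hg
  refine csInf_le ⟨0, ?_⟩ ⟨P.map fun z => (f z, g z), ?_, ?_, ?_⟩
  · rintro - ⟨π, -, -, rfl⟩
    exact integral_nonneg fun _ => norm_nonneg _
  · rw [Measure.fst, Measure.map_map measurable_fst hfg]
    rfl
  · rw [Measure.snd, Measure.map_map measurable_snd hfg]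
    rfl
  · exact (integral_map (f := fun p => ‖p.1 - p.2‖) hfg.aemeasurable
      (continuous_fst.sub continuous_snd).norm.aestronglyMeasurable).symm

theorem W1_map_affine_le {m : ℕ} {P : Measure (EuclideanSpace ℝ (Fin m))}
    [IsProbabilityMeasure P] (hmean : ∫ z, z ∂P = 0) (hmom : Integrable (fun z => ‖z‖ ^ 2) P)
    {C : Matrix (Fin m) (Fin m) ℝ} (hC : ∀ i j, C i j = ∫ z, z i * z j ∂P)
    (A A' : Matrix (Fin m) (Fin m) ℝ) (b b' : EuclideanSpace ℝ (Fin m)) :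
    W1 (P.map fun z => toEuclideanLin A z + b) (P.map fun z => toEuclideanLin A' z + b') ≤
      √(trace ((A - A') * C * (A - A')ᵀ) + ‖b - b'‖ ^ 2) := by
  let T := LinearMap.toContinuousLinearMap (toEuclideanLin (A - A'))
  have hL2 : MemLp (fun z : EuclideanSpace ℝ (Fin m) => z) 2 P :=
    (memLp_two_iff_integrable_sq_norm aestronglyMeasurable_id).2 hmom
  have hT0 : ∫ z, T z ∂P = 0 := by
    rw [T.integral_comp_comm (hL2.integrable one_le_two), hmean, map_zero]
  calc _ ≤ ∫ z, ‖(toEuclideanLin A z + b) - (toEuclideanLin A' z + b')‖ ∂P :=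
        W1_map_le_integral_norm_sub P
          ((toEuclideanLin A).continuous_of_finiteDimensional.measurable.add_const b)
          ((toEuclideanLin A').continuous_of_finiteDimensional.measurable.add_const b')
    _ = ∫ z, ‖T z + (b - b')‖ ∂P := by
        simp only [T, LinearMap.coe_toContinuousLinearMap', map_sub (toEuclideanLin),
          LinearMap.sub_apply, add_sub_add_comm]
    _ ≤ √(∫ z, ‖T z‖ ^ 2 ∂P + ‖b - b'‖ ^ 2) :=
        integral_norm_add_const_le_sqrt (T.comp_memLp' hL2) hT0 _
    _ = _ := by rw [← integral_norm_toEuclideanLin_sq hmom hC]; rfl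

/-- For a location-scale family D(θ) = law of (S0+Σ(θ))z₀ + μ₀ + μθ with z₀
zero-mean with covariance matrix C, the map D(·) is ε-sensitive with
ε = sqrt(σ_max(μ)² + σ_max(Σ)²), where σ_max(μ) = sup_{‖θ‖=1}‖μθ‖ and
σ_max(Σ) = sup_{‖θ‖=1}‖C^{1/2}Σ(θ)ᵀ‖_F. -/
theorem stmt8 (m d : ℕ) (D0 : Measure (EuclideanSpace ℝ (Fin m))) [IsProbabilityMeasure D0]
    (hmean : ∫ z, z ∂D0 = 0) (hmom : Integrable (fun z => ‖z‖ ^ 2) D0)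
    (C : Matrix (Fin m) (Fin m) ℝ) (hC : ∀ i j, C i j = ∫ z, z i * z j ∂D0)
    (hCpsd : C.PosSemidef)
    (S : EuclideanSpace ℝ (Fin d) →ₗ[ℝ] Matrix (Fin m) (Fin m) ℝ)
    (S0 : Matrix (Fin m) (Fin m) ℝ) (μ₀ : EuclideanSpace ℝ (Fin m))
    (μ : EuclideanSpace ℝ (Fin d) →ₗ[ℝ] EuclideanSpace ℝ (Fin m))
    (D : EuclideanSpace ℝ (Fin d) → Measure (EuclideanSpace ℝ (Fin m)))
    (hD : ∀ θ, D θ = D0.map (fun z =>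
      Matrix.toEuclideanLin (S0 + S θ) z + μ₀ + μ θ))
    (σμ σS : ℝ)
    (hσμ : σμ = ⨆ θ : Metric.sphere (0 : EuclideanSpace ℝ (Fin d)) 1, ‖μ θ‖)
    (hσS : σS = ⨆ θ : Metric.sphere (0 : EuclideanSpace ℝ (Fin d)) 1,
      Real.sqrt (∑ i, ∑ j, (((hCpsd.1.eigenvectorUnitary.1 * diagonal ((RCLike.ofReal : ℝ → ℝ) ∘ (√·) ∘ hCpsd.1.eigenvalues) *
        (star hCpsd.1.eigenvectorUnitary : Matrix (Fin m) (Fin m) ℝ)) * (S (θ : EuclideanSpace ℝ (Fin d)))ᵀ) i j) ^ 2)) :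
    ∀ θ θ', W1 (D θ) (D θ') ≤ Real.sqrt (σμ ^ 2 + σS ^ 2) * ‖θ - θ'‖ := by
  intro θ θ'
  -- the matrix in `hσS` is `C^{1/2}` written out through the spectral theorem
  set R := hCpsd.1.cfc Real.sqrt
  let L : EuclideanSpace ℝ (Fin d) →ₗ[ℝ] Matrix (Fin m) (Fin m) ℝ :=
    LinearMap.mulLeft ℝ R ∘ₗ (transposeLinearEquiv (Fin m) (Fin m) ℝ ℝ).toLinearMap ∘ₗ S
  have hσS' : σS = ⨆ θ : Metric.sphere (0 : EuclideanSpace ℝ (Fin d)) 1,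
      √(∑ i, ∑ j, L θ i j ^ 2) := hσS
  have hD' : ∀ θ, D θ = D0.map fun z => toEuclideanLin (S0 + S θ) z + (μ₀ + μ θ) := fun θ => by
    simp only [hD, add_assoc]
  calc W1 (D θ) (D θ')
      ≤ √(trace (S (θ - θ') * C * (S (θ - θ'))ᵀ) + ‖μ (θ - θ')‖ ^ 2) := by
        rw [hD', hD', map_sub, map_sub, ← add_sub_add_left_eq_sub (S θ) (S θ') S0,
          ← add_sub_add_left_eq_sub (μ θ) (μ θ') μ₀]
        exact W1_map_affine_le hmean hmom hC _ _ _ _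
    _ = √(√(∑ i, ∑ j, L (θ - θ') i j ^ 2) ^ 2 + ‖μ (θ - θ')‖ ^ 2) := by
        rw [Real.sq_sqrt (by positivity), trace_mul_mul_transpose_eq_sum_sq
          hCpsd.cfc_sqrt_transpose_mul_self]
        rfl
    _ ≤ √((σS * ‖θ - θ'‖) ^ 2 + (σμ * ‖θ - θ'‖) ^ 2) := by
        gcongr
        · exact hσS' ▸ sqrt_sum_sq_le_iSup_sphere_mul_norm L (θ - θ')
        · exact hσμ ▸ norm_apply_le_iSup_sphere_mul_norm (LinearMap.toContinuousLinearMap μ) _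
    _ = √((σμ ^ 2 + σS ^ 2) * ‖θ - θ'‖ ^ 2) := by ring_nf
    _ = √(σμ ^ 2 + σS ^ 2) * ‖θ - θ'‖ := by
        rw [Real.sqrt_mul' _ (sq_nonneg _), Real.sqrt_sq (norm_nonneg _)]
end
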